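/- Let H be a β-acyclic hypergraph with a β-elimination ordering ≤ of V(H) and induced lexicographic ordering ≤_H on hyperedges. Let e, f ∈ H with e ≤_H f, and let x, y ∈ V(H) with x ≤ y. If V(H_e^x) ∩ V(H_f^y) ∩ [≤ x] ≠ ∅, then H_e^x ⊆ H_f^y. -/

import Mathlib

/-!
Every hyperedge of `H_e^x` reaches `e` by a walk that is also admissible for `H_f^y`, because
`≤_H` is transitive and `x ≤ y`. A common vertex `v ≤ x` of a hyperedge `g₁ ∈ H_e^x` and a
hyperedge `g₂ ∈ H_f^y` glues the walks `e ⇝ g₁` and `g₂ ⇝ f` into an admissible walk `e ⇝ f`,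
so every walk into `e` extends to one into `f`. Transitivity of `≤_H` holds because `≤_H` is the
reverse of the colexicographic order on `Finset αᵒᵈ`.
-/

variable {α : Type*} [LinearOrder α]

/-- The vertex set `V(H)` of a hypergraph `H`: the union of its hyperedges. -/
def verts (H : Finset (Finset α)) : Finset α := H.sup id

/-- The linear order on `α` is a `β`-elimination ordering of `H`: for every vertex `x`,
the set `{e ∩ [≥ x] | e ∈ H, x ∈ e}` is linearly ordered by inclusion (so that `H` is
`β`-acyclic, witnessed by this ordering). -/
def IsBetaElimOrder (H : Finset (Finset α)) : Prop :=
  ∀ x : α, ∀ e ∈ H, ∀ f ∈ H, x ∈ e → x ∈ f →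
    e.filter (x ≤ ·) ⊆ f.filter (x ≤ ·) ∨ f.filter (x ≤ ·) ⊆ e.filter (x ≤ ·)

/-- The induced lexicographic ordering `≤_H` on hyperedges:
`e ≤_H f` iff `e = f` or `min((e \ f) ∪ (f \ e)) ∈ e`. -/
def edgeLE (e f : Finset α) : Prop :=
  e = f ∨ ∃ m ∈ e, ((e \ f) ∪ (f \ e)).min = (m : WithTop α)

/-- One step of a walk in `H` going only through hyperedges `≤_H e` and vertices `≤ x`. -/
def StepBelow (H : Finset (Finset α)) (e : Finset α) (x : α) (g h : Finset α) : Prop :=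
  g ∈ H ∧ h ∈ H ∧ edgeLE g e ∧ edgeLE h e ∧ ∃ v ∈ g ∩ h, v ≤ x

open Classical in
/-- `H_e^x`: the sub-hypergraph of `H` formed by `e` together with the hyperedges `f ∈ H`
connected to `e` by a walk going only through hyperedges `≤_H e` and vertices `≤ x`. -/
noncomputable def Hex (H : Finset (Finset α)) (e : Finset α) (x : α) : Finset (Finset α) :=
  H.filter fun f => edgeLE f e ∧ Relation.ReflTransGen (StepBelow H e x) f e

open Finset Relation

theorem edgeLE_iff_forall_exists {e f : Finset α} :
    edgeLE e f ↔ ∀ a ∈ f, a ∉ e → ∃ b ∈ e, b ∉ f ∧ b ≤ a := by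
  constructor
  · rintro (rfl | ⟨m, hme, hm⟩) a haf hae
    · exact absurd haf hae
    · have hmf : m ∉ f := by simpa [mem_symmDiff, hme] using mem_of_min hm
      exact ⟨m, hme, hmf, min_le_of_eq (by simp [haf, hae]) hm⟩
  · intro h
    by_cases hef : e = f
    · exact Or.inl hef
    obtain ⟨m, hm⟩ := min_of_nonempty (symmDiff_nonempty.2 hef)
    refine Or.inr ⟨m, ?_, hm⟩
    by_contra hme
    have hmf : m ∈ f := by simpa [mem_symmDiff, hme] using mem_of_min hm
    obtain ⟨b, hbe, hbf, hbm⟩ := h m hmf hme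
    have hmb : m ≤ b := min_le_of_eq (by simp [mem_symmDiff, hbe, hbf]) hm
    exact hme (le_antisymm hmb hbm ▸ hbe)

theorem edgeLE_iff_toColex_le {e f : Finset α} :
    edgeLE e f ↔ toColex (f.map OrderDual.toDual.toEmbedding) ≤
      toColex (e.map OrderDual.toDual.toEmbedding) := by
  simp [edgeLE_iff_forall_exists, Colex.toColex_le_toColex, OrderDual.toDual_le_toDual]

theorem edgeLE_trans {e f g : Finset α} (hef : edgeLE e f) (hfg : edgeLE f g) : edgeLE e g :=
  edgeLE_iff_toColex_le.2 ((edgeLE_iff_toColex_le.1 hfg).trans (edgeLE_iff_toColex_le.1 hef))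

theorem mem_verts {H : Finset (Finset α)} {v : α} : v ∈ verts H ↔ ∃ g ∈ H, v ∈ g := by
  simp [verts]

theorem mem_Hex {H : Finset (Finset α)} {e g : Finset α} {x : α} :
    g ∈ Hex H e x ↔ g ∈ H ∧ edgeLE g e ∧ ReflTransGen (StepBelow H e x) g e := by
  classical
  simp [Hex]

instance (H : Finset (Finset α)) (e : Finset α) (x : α) : Std.Symm (StepBelow H e x) where
  symm _ _ := fun ⟨hg, hh, hge, hhe, v, hv, hvx⟩ => ⟨hh, hg, hhe, hge, v, by rwa [inter_comm], hvx⟩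

section Walks

variable {H : Finset (Finset α)} {e f : Finset α} {x y : α}

theorem StepBelow.mono (hef : edgeLE e f) (hxy : x ≤ y) : StepBelow H e x ≤ StepBelow H f y :=
  fun _ _ ⟨hg, hh, hge, hhe, v, hv, hvx⟩ =>
    ⟨hg, hh, edgeLE_trans hge hef, edgeLE_trans hhe hef, v, hv, hvx.trans hxy⟩

theorem reflTransGen_stepBelow_mono (hef : edgeLE e f) (hxy : x ≤ y) :
    ReflTransGen (StepBelow H e x) ≤ ReflTransGen (StepBelow H f y) :=
  ReflTransGen.mono (StepBelow.mono hef hxy)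

theorem reflTransGen_stepBelow_of_mem_verts_Hex (hef : edgeLE e f) (hxy : x ≤ y) {v : α}
    (hve : v ∈ verts (Hex H e x)) (hvf : v ∈ verts (Hex H f y)) (hvx : v ≤ x) :
    ReflTransGen (StepBelow H f y) e f := by
  obtain ⟨g₁, hg₁, hvg₁⟩ := mem_verts.1 hve
  obtain ⟨g₂, hg₂, hvg₂⟩ := mem_verts.1 hvf
  obtain ⟨hg₁H, hg₁e, hg₁_walk⟩ := mem_Hex.1 hg₁
  obtain ⟨hg₂H, hg₂f, hg₂_walk⟩ := mem_Hex.1 hg₂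
  have he_g₁ : ReflTransGen (StepBelow H f y) e g₁ :=
    Std.Symm.symm _ _ (reflTransGen_stepBelow_mono hef hxy _ _ hg₁_walk)
  have hg₁_g₂ : StepBelow H f y g₁ g₂ :=
    ⟨hg₁H, hg₂H, edgeLE_trans hg₁e hef, hg₂f, v, mem_inter.2 ⟨hvg₁, hvg₂⟩, hvx.trans hxy⟩
  exact (he_g₁.tail hg₁_g₂).trans hg₂_walk

theorem Hex_subset_Hex_of_reflTransGen (hef : edgeLE e f) (hxy : x ≤ y)
    (hwalk : ReflTransGen (StepBelow H f y) e f) : Hex H e x ⊆ Hex H f y := by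
  intro g hg
  obtain ⟨hgH, hge, hg_walk⟩ := mem_Hex.1 hg
  exact mem_Hex.2 ⟨hgH, edgeLE_trans hge hef,
    (reflTransGen_stepBelow_mono hef hxy _ _ hg_walk).trans hwalk⟩

end Walks

theorem Hex_subset_Hex_general (H : Finset (Finset α))
    (e f : Finset α) (hef : edgeLE e f)
    (x y : α) (hxy : x ≤ y)
    (hne : (verts (Hex H e x) ∩ verts (Hex H f y) ∩ (verts H).filter (· ≤ x)).Nonempty) :
    Hex H e x ⊆ Hex H f y := by
  obtain ⟨v, hv⟩ := hne
  simp only [mem_inter, mem_filter] at hv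
  obtain ⟨⟨hve, hvf⟩, -, hvx⟩ := hv
  exact Hex_subset_Hex_of_reflTransGen hef hxy
    (reflTransGen_stepBelow_of_mem_verts_Hex hef hxy hve hvf hvx)

/-- **Lemma (Lemma 2 in Capelli'17).** For a `β`-acyclic hypergraph `H`, if `e ≤_H f`,
`x ≤ y` and `V(H_e^x) ∩ V(H_f^y) ∩ [≤ x] ≠ ∅`, then `H_e^x ⊆ H_f^y`. -/
theorem Hex_subset_Hex (H : Finset (Finset α)) (hβ : IsBetaElimOrder H)
    (e f : Finset α) (he : e ∈ H) (hf : f ∈ H) (hef : edgeLE e f)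
    (x y : α) (hx : x ∈ verts H) (hy : y ∈ verts H) (hxy : x ≤ y)
    (hne : (verts (Hex H e x) ∩ verts (Hex H f y) ∩ (verts H).filter (· ≤ x)).Nonempty) :
    Hex H e x ⊆ Hex H f y :=
  Hex_subset_Hex_general H e f hef x y hxy hne
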